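/- For θ ∈ ℝ^p, let f̃_n(s | θ) = N(s; s(θ), a_n⁻²A(θ)) where s : ℝ^p → ℝ^d is C¹, A : ℝ^p → ℝ^{d×d} is C¹ and positive definite near θ₀, and a_n → ∞. Fix v ∈ ℝ^d, ε_n with a_n ε_n → c_ε < ∞, and s_obs with W_obs := a_n A(θ₀)^{-1/2}(s_obs − s(θ₀)) bounded in probability. Then for any compact K ⊂ ℝ^p, sup_{t∈K} | log[ f̃_n(s_obs + ε_n v | θ₀ + a_n⁻¹ t) / f̃_n(s_obs + ε_n v | θ₀) ] − tᵀ I(θ₀) β₀ {A(θ₀)^{1/2} W_obs + c_ε v} + (1/2) tᵀ I(θ₀) t | → 0 in probability as n → ∞, where I(θ₀) = Ds(θ₀)ᵀ A(θ₀)⁻¹ Ds(θ₀) is assumed full rank and β₀ = I(θ₀)⁻¹ Ds(θ₀)ᵀ A(θ₀)⁻¹. -/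

import Mathlib

/-!
Taking logarithms, the normalising constants of the two Gaussian densities cancel up to
`log det A(θₜ) - log det A(θ₀)`, where `θₜ = θ₀ + aₙ⁻¹ t`, and what remains is a difference of two
quadratic forms in the rescaled residuals `u = aₙ (x - s θ₀)` and `u - r`, `r = aₙ (s θₜ - s θ₀)`.
Writing `A(θₜ)⁻¹ = A(θ₀)⁻¹ + E`, `u = z + ν` with `z = A^{1/2} W + c_ε v`, and `r = Ds t + ρ`, the
difference between the log-ratio and `tᵀ I β z - ½ tᵀ I t` is a sum of terms each of which carries
one of the factors `E`, `ρ`, `ν` or the log-determinant difference. These tend to `0` uniformly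
for `t` in the compact set (continuity of `A`, differentiability of `s`, `aₙ εₙ → c_ε`), while all
other factors are `O(1 + |W|)`. So the error is `o((1 + |W|)²)` uniformly in `t`, and tightness of
`W` turns this into convergence in probability.
-/
open MeasureTheory Matrix Filter Real
open scoped Topology

/-- Multivariate normal density `N(x; μ, Σ)` on `ℝ^k`. -/
noncomputable def gaussDensity (k : ℕ) (S : Matrix (Fin k) (Fin k) ℝ)
    (μ x : Fin k → ℝ) : ℝ :=
  (2 * π) ^ (-(k : ℝ) / 2) * S.det ^ (-(1 : ℝ) / 2) *
    Real.exp (-(1 / 2) * ((x - μ) ⬝ᵥ (S⁻¹ *ᵥ (x - μ))))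

/-- Euclidean norm of a vector in `ℝ^k`. -/
noncomputable def evnorm {k : ℕ} (x : Fin k → ℝ) : ℝ := Real.sqrt (x ⬝ᵥ x)

open Asymptotics

section GaussianDensity

variable {k : ℕ} {S : Matrix (Fin k) (Fin k) ℝ}

theorem gaussDensity_pos (hS : 0 < S.det) (μ x : Fin k → ℝ) : 0 < gaussDensity k S μ x := by
  unfold gaussDensity
  have := Real.rpow_pos_of_pos hS (-(1 : ℝ) / 2)
  positivity

theorem log_gaussDensity (hS : 0 < S.det) (μ x : Fin k → ℝ) :
    Real.log (gaussDensity k S μ x) = -(k / 2) * Real.log (2 * π) - (1 / 2) * Real.log S.det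
      - (1 / 2) * ((x - μ) ⬝ᵥ (S⁻¹ *ᵥ (x - μ))) := by
  have h2π : 0 < 2 * π := by positivity
  unfold gaussDensity
  rw [Real.log_mul (by positivity) (Real.exp_ne_zero _),
    Real.log_mul (Real.rpow_pos_of_pos h2π _).ne' (Real.rpow_pos_of_pos hS _).ne',
    Real.log_exp, Real.log_rpow h2π, Real.log_rpow hS]
  ring

theorem log_gaussDensity_div_rpow_smul {c : ℝ} (hc : 0 < c) {A₁ A₂ : Matrix (Fin k) (Fin k) ℝ}
    (h₁ : 0 < A₁.det) (h₂ : 0 < A₂.det) (μ₁ μ₂ x : Fin k → ℝ) :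
    Real.log (gaussDensity k (c ^ (-2 : ℝ) • A₁) μ₁ x / gaussDensity k (c ^ (-2 : ℝ) • A₂) μ₂ x)
      = -(1 / 2) * (Real.log A₁.det - Real.log A₂.det)
        - (1 / 2) * ((c • (x - μ₁)) ⬝ᵥ (A₁⁻¹ *ᵥ (c • (x - μ₁))))
        + (1 / 2) * ((c • (x - μ₂)) ⬝ᵥ (A₂⁻¹ *ᵥ (c • (x - μ₂)))) := by
  have hc2 : c ^ (-2 : ℝ) = (c ^ 2)⁻¹ := by
    rw [Real.rpow_neg hc.le, Real.rpow_two]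
  have hdet (A : Matrix (Fin k) (Fin k) ℝ) (hA : 0 < A.det) :
      0 < ((c ^ 2)⁻¹ • A).det := by
    rw [det_smul, Fintype.card_fin]; positivity
  have hinv (A : Matrix (Fin k) (Fin k) ℝ) (hA : 0 < A.det) :
      ((c ^ 2)⁻¹ • A)⁻¹ = c ^ 2 • A⁻¹ := by
    refine inv_eq_left_inv ?_
    rw [smul_mul_smul_comm, mul_inv_cancel₀ (by positivity), one_smul,
      nonsing_inv_mul _ hA.ne'.isUnit]
  rw [hc2, Real.log_div (gaussDensity_pos (hdet _ h₁) _ _).ne'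
      (gaussDensity_pos (hdet _ h₂) _ _).ne',
    log_gaussDensity (hdet _ h₁), log_gaussDensity (hdet _ h₂), hinv _ h₁, hinv _ h₂,
    det_smul, det_smul, Real.log_mul (by positivity) h₁.ne', Real.log_mul (by positivity) h₂.ne']
  simp only [smul_mulVec, mulVec_smul, smul_dotProduct, dotProduct_smul, smul_eq_mul]
  ring

end GaussianDensity

theorem Matrix.isUnit_of_rank_eq_card {n K : Type*} [Fintype n] [DecidableEq n] [Field K]
    {A : Matrix n n K} (h : A.rank = Fintype.card n) : IsUnit A := by
  have hrange : LinearMap.range A.mulVecLin = ⊤ :=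
    Submodule.eq_top_of_finrank_eq (by rw [← Matrix.rank, h, Module.finrank_fintype_fun_eq_card])
  exact mulVec_surjective_iff_isUnit.1 (LinearMap.range_eq_top.1 hrange)

theorem dotProduct_transpose_mul_mulVec {m n : Type*} [Fintype m] [Fintype n]
    (D : Matrix m n ℝ) (B : Matrix m m ℝ) (t : n → ℝ) (y : m → ℝ) :
    t ⬝ᵥ ((Dᵀ * B) *ᵥ y) = (D *ᵥ t) ⬝ᵥ (B *ᵥ y) := by
  rw [← mulVec_mulVec, dotProduct_transpose_mulVec, dotProduct_comm]

theorem dotProduct_transpose_mul_mul_mulVec {m n : Type*} [Fintype m] [Fintype n]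
    (D : Matrix m n ℝ) (B : Matrix m m ℝ) (t : n → ℝ) :
    t ⬝ᵥ ((Dᵀ * B * D) *ᵥ t) = (D *ᵥ t) ⬝ᵥ (B *ᵥ (D *ᵥ t)) := by
  rw [← mulVec_mulVec, dotProduct_transpose_mul_mulVec]

theorem dotProduct_transpose_mul_mul_mulVec_inv_mul_mulVec {m n : Type*} [Fintype m] [Fintype n]
    [DecidableEq n] {D : Matrix m n ℝ} {B : Matrix m m ℝ} (hI : IsUnit (Dᵀ * B * D))
    (t : n → ℝ) (y : m → ℝ) :
    t ⬝ᵥ ((Dᵀ * B * D) *ᵥ (((Dᵀ * B * D)⁻¹ * Dᵀ * B) *ᵥ y)) = (D *ᵥ t) ⬝ᵥ (B *ᵥ y) := by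
  rw [mulVec_mulVec, Matrix.mul_assoc _ Dᵀ,
    mul_nonsing_inv_cancel_left _ _ ((isUnit_iff_isUnit_det _).1 hI),
    dotProduct_transpose_mul_mulVec]

theorem dotProduct_mulVec_comm_of_transpose_eq {m : Type*} [Fintype m] {B : Matrix m m ℝ}
    (hB : Bᵀ = B) (x y : m → ℝ) :
    x ⬝ᵥ (B *ᵥ y) = y ⬝ᵥ (B *ᵥ x) := by
  conv_lhs => rw [← hB]
  exact dotProduct_transpose_mulVec B x y

theorem quadratic_expansion_eq {m : Type*} [Fintype m] {B : Matrix m m ℝ} (hB : Bᵀ = B)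
    (E : Matrix m m ℝ) (z ν D ρ : m → ℝ) :
    -(1 / 2) * ((z + ν - (D + ρ)) ⬝ᵥ ((B + E) *ᵥ (z + ν - (D + ρ))))
        + (1 / 2) * ((z + ν) ⬝ᵥ (B *ᵥ (z + ν))) - D ⬝ᵥ (B *ᵥ z) + (1 / 2) * (D ⬝ᵥ (B *ᵥ D))
      = -(1 / 2) * ((z + ν - (D + ρ)) ⬝ᵥ (E *ᵥ (z + ν - (D + ρ))))
        + ρ ⬝ᵥ (B *ᵥ (z + ν)) + D ⬝ᵥ (B *ᵥ ν)
        - (1 / 2) * (ρ ⬝ᵥ (B *ᵥ (D + ρ))) - (1 / 2) * (D ⬝ᵥ (B *ᵥ ρ)) := by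
  have comm := dotProduct_mulVec_comm_of_transpose_eq hB
  simp only [add_mulVec, mulVec_add, mulVec_sub, dotProduct_add, dotProduct_sub, add_dotProduct,
    sub_dotProduct, comm z ν, comm z ρ, comm z D, comm ν ρ, comm ν D, comm ρ D]
  ring

section QuadraticExpansion

attribute [local instance] Matrix.normedAddCommGroup

variable {α m n : Type*} [Fintype m] [Fintype n] {l : Filter α}

theorem abs_dotProduct_mulVec_le (x : m → ℝ) (M : Matrix m n ℝ) (y : n → ℝ) :
    |x ⬝ᵥ (M *ᵥ y)| ≤ Fintype.card m * Fintype.card n * (‖x‖ * ‖M‖ * ‖y‖) := calc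
  |x ⬝ᵥ (M *ᵥ y)| = |∑ i, ∑ j, x i * (M i j * y j)| := by
    simp only [dotProduct, mulVec, Finset.mul_sum]
  _ ≤ ∑ i, ∑ j, |x i * (M i j * y j)| :=
    (Finset.abs_sum_le_sum_abs _ _).trans
      (Finset.sum_le_sum fun i _ => Finset.abs_sum_le_sum_abs _ _)
  _ ≤ ∑ _i : m, ∑ _j : n, ‖x‖ * ‖M‖ * ‖y‖ := by
    gcongr with i _ j _
    rw [abs_mul, abs_mul, ← mul_assoc]
    gcongr
    · exact norm_le_pi_norm x i
    · exact norm_entry_le_entrywise_sup_norm M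
    · exact norm_le_pi_norm y j
  _ = Fintype.card m * Fintype.card n * (‖x‖ * ‖M‖ * ‖y‖) := by
    simp only [Finset.sum_const, Finset.card_univ, nsmul_eq_mul]; ring

theorem isBigO_dotProduct_mulVec (x : α → m → ℝ) (M : α → Matrix m n ℝ) (y : α → n → ℝ) :
    (fun ξ => x ξ ⬝ᵥ (M ξ *ᵥ y ξ)) =O[l] fun ξ => ‖x ξ‖ * ‖M ξ‖ * ‖y ξ‖ :=
  .of_bound _ <| .of_forall fun ξ => by
    rw [Real.norm_eq_abs, Real.norm_of_nonneg (by positivity)]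
    exact abs_dotProduct_mulVec_le _ _ _

variable {x : α → m → ℝ} {M : α → Matrix m n ℝ} {y : α → n → ℝ} {g₁ g₂ : α → ℝ}

theorem isLittleO_dotProduct_mulVec_of_left (hx : x =o[l] g₁) (hM : M =O[l] fun _ => (1 : ℝ))
    (hy : y =O[l] g₂) : (fun ξ => x ξ ⬝ᵥ (M ξ *ᵥ y ξ)) =o[l] fun ξ => g₁ ξ * g₂ ξ := by
  simpa using (isBigO_dotProduct_mulVec x M y).trans_isLittleO
    ((hx.norm_left.mul_isBigO hM.norm_left).mul_isBigO hy.norm_left)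

theorem isLittleO_dotProduct_mulVec_of_matrix (hx : x =O[l] g₁) (hM : M =o[l] fun _ => (1 : ℝ))
    (hy : y =O[l] g₂) : (fun ξ => x ξ ⬝ᵥ (M ξ *ᵥ y ξ)) =o[l] fun ξ => g₁ ξ * g₂ ξ := by
  simpa using (isBigO_dotProduct_mulVec x M y).trans_isLittleO
    ((hx.norm_left.mul_isLittleO hM.norm_left).mul_isBigO hy.norm_left)

theorem isLittleO_dotProduct_mulVec_of_right (hx : x =O[l] g₁) (hM : M =O[l] fun _ => (1 : ℝ))
    (hy : y =o[l] g₂) : (fun ξ => x ξ ⬝ᵥ (M ξ *ᵥ y ξ)) =o[l] fun ξ => g₁ ξ * g₂ ξ := by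
  simpa using (isBigO_dotProduct_mulVec x M y).trans_isLittleO
    ((hx.norm_left.mul hM.norm_left).mul_isLittleO hy.norm_left)

theorem isLittleO_quadratic_expansion {g : α → ℝ} (hg : (fun _ => (1 : ℝ)) =O[l] g)
    {B : Matrix m m ℝ} (hB : Bᵀ = B) {E : α → Matrix m m ℝ} {Δ : α → ℝ} {z ν D ρ : α → m → ℝ}
    (hE : E =o[l] fun _ => (1 : ℝ)) (hΔ : Δ =o[l] fun _ => (1 : ℝ)) (hz : z =O[l] g)
    (hν : ν =o[l] fun _ => (1 : ℝ)) (hD : D =O[l] fun _ => (1 : ℝ))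
    (hρ : ρ =o[l] fun _ => (1 : ℝ)) :
    (fun ξ => -(1 / 2) * Δ ξ
        - (1 / 2) * ((z ξ + ν ξ - (D ξ + ρ ξ)) ⬝ᵥ ((B + E ξ) *ᵥ (z ξ + ν ξ - (D ξ + ρ ξ))))
        + (1 / 2) * ((z ξ + ν ξ) ⬝ᵥ (B *ᵥ (z ξ + ν ξ)))
        - D ξ ⬝ᵥ (B *ᵥ z ξ) + (1 / 2) * (D ξ ⬝ᵥ (B *ᵥ D ξ)))
      =o[l] fun ξ => g ξ * g ξ := by
  have hB1 := isBigO_const_one ℝ B l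
  have hρg := hρ.trans_isBigO hg
  have hDg := hD.trans hg
  have hu : (fun ξ => z ξ + ν ξ) =O[l] g := hz.add (hν.trans_isBigO hg).isBigO
  have hr : (fun ξ => D ξ + ρ ξ) =O[l] g := hDg.add hρg.isBigO
  have hΔg : Δ =o[l] fun ξ => g ξ * g ξ := hΔ.trans_isBigO (by simpa using hg.mul hg)
  refine ((((((hΔg.const_mul_left (-(1 / 2))).add
    ((isLittleO_dotProduct_mulVec_of_matrix (hu.sub hr) hE (hu.sub hr)).const_mul_left
      (-(1 / 2)))).add
    (isLittleO_dotProduct_mulVec_of_left hρg hB1 hu)).add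
    (isLittleO_dotProduct_mulVec_of_right hDg hB1 (hν.trans_isBigO hg))).add
    ((isLittleO_dotProduct_mulVec_of_left hρg hB1 hr).const_mul_left (-(1 / 2)))).add
    ((isLittleO_dotProduct_mulVec_of_right hDg hB1 hρg).const_mul_left (-(1 / 2)))).congr_left
    fun ξ => ?_
  linear_combination (quadratic_expansion_eq hB (E ξ) (z ξ) (ν ξ) (D ξ) (ρ ξ)).symm

end QuadraticExpansion

section LocalParameter

theorem isBigO_snd_prod_principal {β E : Type*} [SeminormedAddCommGroup E] {l : Filter β}
    {K : Set E} (hK : Bornology.IsBounded K) :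
    (fun bt : β × E => bt.2) =O[l ×ˢ 𝓟 K] fun _ => (1 : ℝ) := by
  obtain ⟨R, hR⟩ := hK.exists_norm_le
  refine (isBigO_one_iff ℝ).2 (isBoundedUnder_of_eventually_le (a := R) ?_)
  exact eventually_prod_principal_iff.2 (.of_forall fun _ => hR)

variable {E F : Type*} [NormedAddCommGroup E] [NormedSpace ℝ E]
  [NormedAddCommGroup F] [NormedSpace ℝ F] {a : ℕ → ℝ} {K : Set E}

theorem tendsto_add_inv_smul_prod_principal (ha : Tendsto a atTop atTop)
    (hK : Bornology.IsBounded K) (θ₀ : E) :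
    Tendsto (fun nt : ℕ × E => θ₀ + (a nt.1)⁻¹ • nt.2) (atTop ×ˢ 𝓟 K) (𝓝 θ₀) := by
  simpa using tendsto_const_nhds.add <|
    (ha.inv_tendsto_atTop.comp tendsto_fst).zero_smul_isBoundedUnder_le
      ((isBigO_one_iff ℝ).1 (isBigO_snd_prod_principal hK))

theorem HasFDerivAt.tendsto_smul_sub_sub {f : E → F} {f' : E →L[ℝ] F} {θ₀ : E}
    (hf : HasFDerivAt f f' θ₀) (ha : Tendsto a atTop atTop) (hK : Bornology.IsBounded K) :
    Tendsto (fun nt : ℕ × E => a nt.1 • (f (θ₀ + (a nt.1)⁻¹ • nt.2) - f θ₀) - f' nt.2)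
      (atTop ×ˢ 𝓟 K) (𝓝 0) := by
  have hne : ∀ᶠ nt : ℕ × E in atTop ×ˢ 𝓟 K, a nt.1 ≠ 0 :=
    tendsto_fst.eventually (ha.eventually_ne_atTop 0)
  have h := (isBigO_refl (fun nt : ℕ × E => a nt.1) _).smul_isLittleO
    (hf.isLittleO.comp_tendsto (tendsto_add_inv_smul_prod_principal ha hK θ₀))
  refine (isLittleO_one_iff ℝ).1 <| (h.congr' ?_ ?_).trans_isBigO (isBigO_snd_prod_principal hK)
  all_goals filter_upwards [hne] with nt hnt
  · simp [smul_sub, map_smul, smul_smul, mul_inv_cancel₀ hnt]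
  · simp [smul_smul, mul_inv_cancel₀ hnt]

theorem ContinuousAt.isLittleO_comp_sub_one {α X F : Type*} [TopologicalSpace X]
    [SeminormedAddCommGroup F] {l : Filter α} {g : X → F} {x₀ : X} (hg : ContinuousAt g x₀)
    {θ : α → X} (hθ : Tendsto θ l (𝓝 x₀)) : (fun ξ => g (θ ξ) - g x₀) =o[l] fun _ => (1 : ℝ) :=
  (isLittleO_one_iff ℝ).2 (tendsto_sub_nhds_zero_iff.2 (hg.tendsto.comp hθ))

end LocalParameter

theorem norm_le_evnorm {k : ℕ} (x : Fin k → ℝ) : ‖x‖ ≤ evnorm x := by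
  refine (pi_norm_le_iff_of_nonneg (Real.sqrt_nonneg _)).2 fun i => ?_
  rw [Real.norm_eq_abs, ← Real.sqrt_sq_eq_abs, sq]
  exact Real.sqrt_le_sqrt (Finset.single_le_sum (f := fun j => x j * x j)
    (fun j _ => mul_self_nonneg (x j)) (Finset.mem_univ i))

theorem evnorm_nonneg {k : ℕ} (x : Fin k → ℝ) : 0 ≤ evnorm x := Real.sqrt_nonneg _

theorem isBigO_one_add_evnorm {α : Type*} {l : Filter α} {k : ℕ} (f : α → Fin k → ℝ) :
    f =O[l] fun ξ => 1 + evnorm (f ξ) :=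
  .of_bound 1 <| .of_forall fun ξ => by
    have := evnorm_nonneg (f ξ)
    rw [one_mul, Real.norm_of_nonneg (by linarith : 0 ≤ 1 + evnorm (f ξ))]
    linarith [norm_le_evnorm (f ξ)]

theorem isBigO_one_one_add_evnorm {α : Type*} {l : Filter α} {k : ℕ} (f : α → Fin k → ℝ) :
    (fun _ => (1 : ℝ)) =O[l] fun ξ => 1 + evnorm (f ξ) :=
  .of_bound 1 <| .of_forall fun ξ => by
    have := evnorm_nonneg (f ξ)
    rw [norm_one, one_mul, Real.norm_of_nonneg (by linarith : 0 ≤ 1 + evnorm (f ξ))]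
    linarith

section LAN

attribute [local instance] Matrix.normedAddCommGroup

theorem gaussian_logLikRatio_expansion {p d : ℕ} {θ₀ : Fin p → ℝ}
    {s : (Fin p → ℝ) → (Fin d → ℝ)} {A : (Fin p → ℝ) → Matrix (Fin d) (Fin d) ℝ}
    (hA : ContinuousAt A θ₀) (hApos : ∀ᶠ θ in 𝓝 θ₀, (A θ).PosDef) {Ds : Matrix (Fin d) (Fin p) ℝ}
    (hDs : HasFDerivAt s (LinearMap.toContinuousLinearMap Ds.mulVecLin) θ₀)
    (hI : IsUnit (Dsᵀ * (A θ₀)⁻¹ * Ds)) {a ε : ℕ → ℝ} (ha : Tendsto a atTop atTop) {cε : ℝ}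
    (hcε : Tendsto (fun n => a n * ε n) atTop (𝓝 cε)) (v : Fin d → ℝ)
    (Asqrt : Matrix (Fin d) (Fin d) ℝ) {K : Set (Fin p → ℝ)} (hK : Bornology.IsBounded K) :
    ∀ e > (0 : ℝ), ∀ᶠ n in atTop, ∀ t ∈ K, ∀ w : Fin d → ℝ,
      |Real.log
          (gaussDensity d ((a n) ^ (-2 : ℝ) • A (θ₀ + (a n)⁻¹ • t)) (s (θ₀ + (a n)⁻¹ • t))
              (s θ₀ + (a n)⁻¹ • (Asqrt *ᵥ w) + ε n • v) /
            gaussDensity d ((a n) ^ (-2 : ℝ) • A θ₀) (s θ₀)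
              (s θ₀ + (a n)⁻¹ • (Asqrt *ᵥ w) + ε n • v)) -
        t ⬝ᵥ ((Dsᵀ * (A θ₀)⁻¹ * Ds) *ᵥ
          (((Dsᵀ * (A θ₀)⁻¹ * Ds)⁻¹ * Dsᵀ * (A θ₀)⁻¹) *ᵥ (Asqrt *ᵥ w + cε • v))) +
        (1 / 2) * (t ⬝ᵥ ((Dsᵀ * (A θ₀)⁻¹ * Ds) *ᵥ t))| ≤ e * (1 + evnorm w) ^ 2 := by
  have hA₀ : (A θ₀).PosDef := hApos.self_of_nhds
  have hB : ((A θ₀)⁻¹)ᵀ = (A θ₀)⁻¹ := by simpa using hA₀.isHermitian.inv.eq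
  -- Along `L`, `n → ∞` uniformly in `t ∈ K` and in the standardised observation `w`.
  set L := ((atTop : Filter ℕ) ×ˢ 𝓟 K) ×ˢ (⊤ : Filter (Fin d → ℝ)) with hL
  have hn : Tendsto (fun ξ : (ℕ × (Fin p → ℝ)) × (Fin d → ℝ) => ξ.1.1) L atTop :=
    tendsto_fst.comp tendsto_fst
  have hθ : Tendsto (fun ξ : (ℕ × (Fin p → ℝ)) × (Fin d → ℝ) => θ₀ + (a ξ.1.1)⁻¹ • ξ.1.2) L
      (𝓝 θ₀) :=
    (tendsto_add_inv_smul_prod_principal ha hK θ₀).comp tendsto_fst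
  have hg := isBigO_one_one_add_evnorm (l := L) Prod.snd
  have hE : (fun ξ => (A (θ₀ + (a ξ.1.1)⁻¹ • ξ.1.2))⁻¹ - (A θ₀)⁻¹) =o[L] fun _ => (1 : ℝ) := by
    have hinv : ContinuousAt Ring.inverse (A θ₀).det := by
      rw [Ring.inverse_eq_inv']; exact continuousAt_inv₀ hA₀.det_pos.ne'
    exact ((continuousAt_matrix_inv _ hinv).comp hA).isLittleO_comp_sub_one hθ
  have hΔ : (fun ξ => Real.log (A (θ₀ + (a ξ.1.1)⁻¹ • ξ.1.2)).det - Real.log (A θ₀).det)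
      =o[L] fun _ => (1 : ℝ) := by
    have hdet : ContinuousAt (fun θ => (A θ).det) θ₀ := by fun_prop
    exact (ContinuousAt.comp (f := fun θ => (A θ).det) (Real.continuousAt_log hA₀.det_pos.ne')
      hdet).isLittleO_comp_sub_one hθ
  have hz : (fun ξ => Asqrt *ᵥ ξ.2 + cε • v) =O[L] fun ξ => 1 + evnorm ξ.2 :=
    ((Asqrt.mulVecLin.toContinuousLinearMap.isBigO_comp _ L).trans
      (isBigO_one_add_evnorm Prod.snd)).add ((isBigO_const_one ℝ _ L).trans hg)
  have hν : (fun ξ => (a ξ.1.1 * ε ξ.1.1 - cε) • v) =o[L] fun _ => (1 : ℝ) :=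
    (isLittleO_one_iff ℝ).2 (by
      simpa [Function.comp_def] using ((hcε.sub_const cε).smul_const v).comp hn)
  have hD : (fun ξ => Ds *ᵥ ξ.1.2) =O[L] fun _ => (1 : ℝ) :=
    (Ds.mulVecLin.toContinuousLinearMap.isBigO_comp _ L).trans
      ((isBigO_snd_prod_principal hK).comp_tendsto tendsto_fst)
  have hρ : (fun ξ => a ξ.1.1 • (s (θ₀ + (a ξ.1.1)⁻¹ • ξ.1.2) - s θ₀) - Ds *ᵥ ξ.1.2)
      =o[L] fun _ => (1 : ℝ) :=
    (isLittleO_one_iff ℝ).2 (by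
      simpa [Function.comp_def] using (hDs.tendsto_smul_sub_sub ha hK).comp tendsto_fst)
  have hgood : ∀ᶠ ξ in L, 0 < a ξ.1.1 ∧ (A (θ₀ + (a ξ.1.1)⁻¹ • ξ.1.2)).PosDef :=
    (hn.eventually (ha.eventually_gt_atTop 0)).and (hθ.eventually hApos)
  intro e he
  have h := ((isLittleO_quadratic_expansion hg hB hE hΔ hz hν hD hρ).bound he).and hgood
  rw [hL, ← principal_univ, eventually_prod_principal_iff, eventually_prod_principal_iff] at h
  filter_upwards [h] with n h t ht w
  obtain ⟨hle, hpos, hPD⟩ := h t ht w trivial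
  have hres (μ : Fin d → ℝ) : a n • (s θ₀ + (a n)⁻¹ • (Asqrt *ᵥ w) + ε n • v - μ)
      = Asqrt *ᵥ w + (a n * ε n) • v - a n • (μ - s θ₀) := by
    simp only [smul_sub, smul_add, smul_smul, mul_inv_cancel₀ hpos.ne', one_smul]; abel
  rw [Real.norm_eq_abs, Real.norm_of_nonneg (mul_self_nonneg _), ← sq] at hle
  convert hle using 2
  rw [log_gaussDensity_div_rpow_smul hpos hPD.det_pos hA₀.det_pos, hres, hres, sub_self, smul_zero,
    sub_zero, dotProduct_transpose_mul_mul_mulVec_inv_mul_mulVec hI,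
    dotProduct_transpose_mul_mul_mulVec, add_sub_cancel, add_sub_cancel, add_assoc, ← add_smul,
    add_sub_cancel]

end LAN

def BoundedInProbability {Ω : Type*} [MeasurableSpace Ω] (μ : Measure Ω) (X : ℕ → Ω → ℝ) :
    Prop :=
  ∀ δ > (0 : ℝ), ∃ M : ℝ, ∀ᶠ n in atTop, μ {ω | M ≤ X n ω} ≤ ENNReal.ofReal δ

theorem tendstoInMeasure_zero_of_abs_le_mul_sq {Ω : Type*} [MeasurableSpace Ω]
    {μ : Measure Ω} {G X : ℕ → Ω → ℝ} (hX0 : ∀ n ω, 0 ≤ X n ω)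
    (hX : BoundedInProbability μ X)
    (hG : ∀ e > (0 : ℝ), ∀ᶠ n in atTop, ∀ ω, |G n ω| ≤ e * (1 + X n ω) ^ 2) :
    TendstoInMeasure μ G atTop (fun _ => 0) := by
  refine tendstoInMeasure_iff_dist.2 fun η hη => ?_
  refine ENNReal.tendsto_nhds_zero.2 fun δ' hδ' => ?_
  obtain ⟨δ, -, hδ0, hδ⟩ := ENNReal.lt_iff_exists_real_btwn.1 hδ'
  obtain ⟨M, hM⟩ := hX δ (ENNReal.ofReal_pos.1 hδ0)
  set M' := max M 0
  have hM' : 0 < (1 + M') ^ 2 := by positivity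
  filter_upwards [hM, hG (η / (1 + M') ^ 2) (by positivity)] with n hMn hGn
  refine le_trans (measure_mono fun ω hω => ?_) (hMn.trans hδ.le)
  by_contra hlt
  have hXM : (1 + X n ω) ^ 2 < (1 + M') ^ 2 := by
    have := hX0 n ω
    gcongr
    exact (not_le.1 hlt).trans_le (le_max_left _ _)
  have : |G n ω| < η := calc
    |G n ω| ≤ η / (1 + M') ^ 2 * (1 + X n ω) ^ 2 := hGn ω
    _ < η / (1 + M') ^ 2 * (1 + M') ^ 2 := by gcongr
    _ = η := div_mul_cancel₀ _ hM'.ne'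
  simp only [Set.mem_ofPred_eq, Real.dist_eq, sub_zero] at hω
  linarith

theorem gaussian_model_LAN_expansion_general (p d : ℕ)
    (Ω : Type*) [MeasureSpace Ω]
    (θ₀ : Fin p → ℝ)
    (s : (Fin p → ℝ) → (Fin d → ℝ))
    (A : (Fin p → ℝ) → Matrix (Fin d) (Fin d) ℝ)
    (hA : ∀ i j, ContDiff ℝ 1 (fun θ => A θ i j))
    (hApos : ∀ᶠ θ in 𝓝 θ₀, (A θ).PosDef)
    (Ds : Matrix (Fin d) (Fin p) ℝ)
    (hDs : HasFDerivAt s (LinearMap.toContinuousLinearMap Ds.mulVecLin) θ₀)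
    (hIrank : (Dsᵀ * (A θ₀)⁻¹ * Ds).rank = p)
    (a : ℕ → ℝ) (ha : Tendsto a atTop atTop)
    (ε : ℕ → ℝ)
    (cε : ℝ) (hcε : Tendsto (fun n => a n * ε n) atTop (𝓝 cε))
    (v : Fin d → ℝ)
    (Asqrt : Matrix (Fin d) (Fin d) ℝ)
    (Wobs : ℕ → Ω → (Fin d → ℝ))
    (hW_tight : ∀ δ > (0 : ℝ), ∃ M : ℝ, ∀ᶠ n in atTop,
      (volume {ω | M ≤ evnorm (Wobs n ω)}) ≤ ENNReal.ofReal δ) :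
    ∀ Kset : Set (Fin p → ℝ), IsCompact Kset →
      TendstoInMeasure (volume : Measure Ω)
        (fun n ω =>
          ⨆ t ∈ Kset,
            |Real.log
                (gaussDensity d ((a n) ^ (-2 : ℝ) • A (θ₀ + (a n)⁻¹ • t))
                    (s (θ₀ + (a n)⁻¹ • t))
                    (s θ₀ + (a n)⁻¹ • (Asqrt *ᵥ Wobs n ω) + ε n • v) /
                  gaussDensity d ((a n) ^ (-2 : ℝ) • A θ₀) (s θ₀)
                    (s θ₀ + (a n)⁻¹ • (Asqrt *ᵥ Wobs n ω) + ε n • v)) -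
              t ⬝ᵥ ((Dsᵀ * (A θ₀)⁻¹ * Ds) *ᵥ
                (((Dsᵀ * (A θ₀)⁻¹ * Ds)⁻¹ * Dsᵀ * (A θ₀)⁻¹) *ᵥ
                  (Asqrt *ᵥ Wobs n ω + cε • v))) +
              (1 / 2) * (t ⬝ᵥ ((Dsᵀ * (A θ₀)⁻¹ * Ds) *ᵥ t))|)
        atTop (fun _ => (0 : ℝ)) := by
  intro K hK
  have hAcont : ContinuousAt A θ₀ :=
    (continuous_pi fun i => continuous_pi fun j => (hA i j).continuous).continuousAt
  have hI : IsUnit (Dsᵀ * (A θ₀)⁻¹ * Ds) := isUnit_of_rank_eq_card (by rwa [Fintype.card_fin])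
  have hLAN := gaussian_logLikRatio_expansion hAcont hApos hDs hI ha hcε v Asqrt hK.isBounded
  refine tendstoInMeasure_zero_of_abs_le_mul_sq (fun n ω => evnorm_nonneg _) hW_tight
    fun e he => ?_
  filter_upwards [hLAN e he] with n hn ω
  have hbound : 0 ≤ e * (1 + evnorm (Wobs n ω)) ^ 2 := by positivity
  rw [abs_of_nonneg (Real.iSup_nonneg fun t => Real.iSup_nonneg fun _ => abs_nonneg _)]
  exact Real.iSup_le (fun t => Real.iSup_le (fun ht => hn t ht _) hbound) hbound

/-- local asymptotic normality type expansion (condition KV1) for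
the Gaussian approximation `f̃_n(s|θ) = N(s; s(θ), a_n⁻²A(θ))` to the
summary-statistic model. -/
theorem gaussian_model_LAN_expansion (p d : ℕ)
    (Ω : Type*) [MeasureSpace Ω] [IsProbabilityMeasure (volume : Measure Ω)]
    (θ₀ : Fin p → ℝ)
    (s : (Fin p → ℝ) → (Fin d → ℝ)) (hs : ContDiff ℝ 1 s)
    (A : (Fin p → ℝ) → Matrix (Fin d) (Fin d) ℝ)
    (hA : ∀ i j, ContDiff ℝ 1 (fun θ => A θ i j))
    (hApos : ∀ᶠ θ in 𝓝 θ₀, (A θ).PosDef)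
    (Ds : Matrix (Fin d) (Fin p) ℝ)
    (hDs : HasFDerivAt s (LinearMap.toContinuousLinearMap Ds.mulVecLin) θ₀)
    (hIrank : (Dsᵀ * (A θ₀)⁻¹ * Ds).rank = p)
    (a : ℕ → ℝ) (ha_pos : ∀ n, 0 < a n) (ha : Tendsto a atTop atTop)
    (ε : ℕ → ℝ) (hε_pos : ∀ n, 0 < ε n)
    (cε : ℝ) (hcε : Tendsto (fun n => a n * ε n) atTop (𝓝 cε))
    (v : Fin d → ℝ)
    (Asqrt : Matrix (Fin d) (Fin d) ℝ)
    (hsq : Asqrt * Asqrt = A θ₀) (hsym : Asqrtᵀ = Asqrt)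
    (Wobs : ℕ → Ω → (Fin d → ℝ)) (hW_meas : ∀ n, Measurable (Wobs n))
    (hW_tight : ∀ δ > (0 : ℝ), ∃ M : ℝ, ∀ᶠ n in atTop,
      (volume {ω | M ≤ evnorm (Wobs n ω)}) ≤ ENNReal.ofReal δ) :
    ∀ Kset : Set (Fin p → ℝ), IsCompact Kset →
      TendstoInMeasure (volume : Measure Ω)
        (fun n ω =>
          ⨆ t ∈ Kset,
            |Real.log
                (gaussDensity d ((a n) ^ (-2 : ℝ) • A (θ₀ + (a n)⁻¹ • t))
                    (s (θ₀ + (a n)⁻¹ • t))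
                    (s θ₀ + (a n)⁻¹ • (Asqrt *ᵥ Wobs n ω) + ε n • v) /
                  gaussDensity d ((a n) ^ (-2 : ℝ) • A θ₀) (s θ₀)
                    (s θ₀ + (a n)⁻¹ • (Asqrt *ᵥ Wobs n ω) + ε n • v)) -
              t ⬝ᵥ ((Dsᵀ * (A θ₀)⁻¹ * Ds) *ᵥ
                (((Dsᵀ * (A θ₀)⁻¹ * Ds)⁻¹ * Dsᵀ * (A θ₀)⁻¹) *ᵥ
                  (Asqrt *ᵥ Wobs n ω + cε • v))) +
              (1 / 2) * (t ⬝ᵥ ((Dsᵀ * (A θ₀)⁻¹ * Ds) *ᵥ t))|)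
        atTop (fun _ => (0 : ℝ)) :=
  gaussian_model_LAN_expansion_general p d Ω θ₀ s A hA hApos Ds hDs hIrank a ha ε cε hcε v Asqrt
    Wobs hW_tight
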